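/- Let X(ℝ) be a reflexive Banach function space and w a weight with w ∈ X_loc(ℝ) and 1/w ∈ X'_loc(ℝ). Then the weighted Banach function space X(ℝ,w) is reflexive. -/
import Mathlib


open MeasureTheory Filter Topology Set ENNReal NNReal

noncomputable section
/-- A Banach function norm on (nonnegative, `ℝ≥0∞`-valued) measurable functions on `ℝ`,
following Bennett–Sharpley, Chap. 1, Definition 1.1: axioms (A1)–(A5). -/
structure BFNorm (ρ : (ℝ → ℝ≥0∞) → ℝ≥0∞) : Prop where
  /-- (A1) ρ(f) = 0 iff f = 0 a.e. -/
  eq_zero_iff : ∀ f : ℝ → ℝ≥0∞, Measurable f → (ρ f = 0 ↔ f =ᵐ[volume] 0)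
  /-- (A1) absolute homogeneity. -/
  smul : ∀ (a : ℝ≥0) (f : ℝ → ℝ≥0∞), Measurable f →
    ρ (fun x => (a : ℝ≥0∞) * f x) = (a : ℝ≥0∞) * ρ f
  /-- (A1) triangle inequality. -/
  add_le : ∀ f g : ℝ → ℝ≥0∞, Measurable f → Measurable g →
    ρ (fun x => f x + g x) ≤ ρ f + ρ g
  /-- (A2) the lattice property. -/
  mono : ∀ f g : ℝ → ℝ≥0∞, Measurable f → Measurable g →
    (∀ᵐ x ∂volume, g x ≤ f x) → ρ g ≤ ρ f
  /-- (A3) the Fatou property: if 0 ≤ fₙ ↑ f a.e., then ρ(fₙ) ↑ ρ(f). -/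
  fatou : ∀ (fs : ℕ → ℝ → ℝ≥0∞) (f : ℝ → ℝ≥0∞), (∀ n, Measurable (fs n)) →
    Measurable f → (∀ᵐ x ∂volume, Monotone fun n => fs n x) →
    (∀ᵐ x ∂volume, Tendsto (fun n => fs n x) atTop (𝓝 (f x))) →
    Monotone (fun n => ρ (fs n)) ∧ Tendsto (fun n => ρ (fs n)) atTop (𝓝 (ρ f))
  /-- (A4) characteristic functions of finite-measure sets have finite norm. -/
  indicator_lt_top : ∀ E : Set ℝ, MeasurableSet E → volume E < ∞ →
    ρ (E.indicator 1) < ∞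
  /-- (A5) local embedding into L¹. -/
  le_norm : ∀ E : Set ℝ, MeasurableSet E → volume E < ∞ →
    ∃ C : ℝ≥0∞, 0 < C ∧ C < ∞ ∧ ∀ f : ℝ → ℝ≥0∞, Measurable f →
      ∫⁻ x in E, f x ∂volume ≤ C * ρ f

/-- A weight: a measurable function which is positive and finite a.e. -/
def IsWeight (w : ℝ → ℝ≥0∞) : Prop :=
  Measurable w ∧ ∀ᵐ x ∂volume, 0 < w x ∧ w x < ∞

/-- The associate (Köthe dual) norm of a function norm `ρ`:
`ρ'(g) = sup { ∫ f g : f ≥ 0 measurable, ρ(f) ≤ 1 }`. -/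
def assocNorm (ρ : (ℝ → ℝ≥0∞) → ℝ≥0∞) (g : ℝ → ℝ≥0∞) : ℝ≥0∞ :=
  ⨆ f ∈ {f : ℝ → ℝ≥0∞ | Measurable f ∧ ρ f ≤ 1}, ∫⁻ x, f x * g x ∂volume

/-- The weighted function norm `ρ_w(f) = ρ(f·w)`. -/
def weightedNorm (ρ : (ℝ → ℝ≥0∞) → ℝ≥0∞) (w : ℝ → ℝ≥0∞) : (ℝ → ℝ≥0∞) → ℝ≥0∞ :=
  fun f => ρ (fun x => f x * w x)
/-- The function space generated by `ρ` has absolutely continuous norm: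
`ρ(f χ_{Eₙ}) → 0` whenever `f` has finite norm and `χ_{Eₙ} → 0` a.e. -/
def HasACNorm (ρ : (ℝ → ℝ≥0∞) → ℝ≥0∞) : Prop :=
  ∀ f : ℝ → ℝ≥0∞, Measurable f → ρ f < ∞ →
    ∀ E : ℕ → Set ℝ, (∀ n, MeasurableSet (E n)) →
      (∀ᵐ x ∂volume, Tendsto (fun n => (E n).indicator (1 : ℝ → ℝ≥0∞) x) atTop (𝓝 0)) →
      Tendsto (fun n => ρ ((E n).indicator f)) atTop (𝓝 0)

/-- Reflexivity of a Banach function space, characterized à la Bennett–Sharpley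
(Chap. 1, Corollary 4.4): a Banach function space is reflexive if and only if both it and
its associate space have absolutely continuous norm; we take this as the definition. -/
def ReflexiveBFS (ρ : (ℝ → ℝ≥0∞) → ℝ≥0∞) : Prop :=
  HasACNorm ρ ∧ HasACNorm (assocNorm ρ)

lemma indicator_mul_aux {E : Set ℝ} (g v : ℝ → ℝ≥0∞) :
    (fun x => (E.indicator g) x * v x) = E.indicator (fun x => g x * v x) := by
  funext x
  by_cases hx : x ∈ E <;> simp [Set.indicator_apply, hx]

/-- If `X(ℝ)` is a reflexive Banach function space and `w` a weight with `w ∈ X_loc` and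
`1/w ∈ X'_loc`, then the weighted Banach function space `X(ℝ,w)` is reflexive. -/
theorem weighted_reflexive (ρ : (ℝ → ℝ≥0∞) → ℝ≥0∞) (hρ : BFNorm ρ)
    (w : ℝ → ℝ≥0∞) (hw : IsWeight w)
    (hwloc : ∀ E : Set ℝ, MeasurableSet E → volume E < ∞ → ρ (E.indicator w) < ∞)
    (hwloc' : ∀ E : Set ℝ, MeasurableSet E → volume E < ∞ → assocNorm ρ (E.indicator w⁻¹) < ∞)
    (href : ReflexiveBFS ρ) :
    ReflexiveBFS (weightedNorm ρ w) := by
  obtain ⟨hwm, hwae⟩ := hw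
  have hae1 : ∀ᵐ x ∂volume, w x * (w x)⁻¹ = 1 := by
    filter_upwards [hwae] with x hx
    exact ENNReal.mul_inv_cancel hx.1.ne' hx.2.ne
  have hae2 : ∀ᵐ x ∂volume, (w x)⁻¹ * w x = 1 := by
    filter_upwards [hwae] with x hx
    exact ENNReal.inv_mul_cancel hx.1.ne' hx.2.ne
  have rho_congr : ∀ f g : ℝ → ℝ≥0∞, Measurable f → Measurable g →
      f =ᵐ[volume] g → ρ f = ρ g := by
    intro f g hf hg h
    refine le_antisymm (hρ.mono g f hg hf ?_) (hρ.mono f g hf hg ?_)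
    · filter_upwards [h] with x hx; exact hx.le
    · filter_upwards [h] with x hx; exact hx.ge
  have assoc_eq : ∀ g : ℝ → ℝ≥0∞,
      assocNorm (weightedNorm ρ w) g = assocNorm ρ (fun x => g x * (w x)⁻¹) := by
    intro g
    unfold assocNorm
    apply le_antisymm
    · refine iSup₂_le fun f hf => ?_
      refine le_iSup₂_of_le (fun x => f x * w x) ⟨hf.1.mul hwm, hf.2⟩ ?_
      refine le_of_eq (lintegral_congr_ae ?_)
      filter_upwards [hae1] with x hx
      calc f x * g x = f x * g x * 1 := (mul_one _).symm
        _ = f x * g x * (w x * (w x)⁻¹) := by rw [hx]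
        _ = f x * w x * (g x * (w x)⁻¹) := by ring
    · refine iSup₂_le fun h hh => ?_
      refine le_iSup₂_of_le (fun x => h x * (w x)⁻¹) ⟨hh.1.mul hwm.inv, ?_⟩ ?_
      · show ρ (fun x => (h x * (w x)⁻¹) * w x) ≤ 1
        have heq : ρ (fun x => h x * (w x)⁻¹ * w x) = ρ h := by
          refine rho_congr _ _ ((hh.1.mul hwm.inv).mul hwm) hh.1 ?_
          filter_upwards [hae2] with x hx
          rw [mul_assoc, hx, mul_one]
        rw [heq]; exact hh.2
      · exact le_of_eq (lintegral_congr fun x => by ring)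
  constructor
  · intro f hf hfin E hE hEt
    have h1 : ∀ n, weightedNorm ρ w ((E n).indicator f)
        = ρ ((E n).indicator (fun x => f x * w x)) := fun n => by
      unfold weightedNorm; rw [indicator_mul_aux]
    simp only [h1]
    exact href.1 (fun x => f x * w x) (hf.mul hwm) hfin E hE hEt
  · intro g hg hfin E hE hEt
    have h1 : ∀ n, assocNorm (weightedNorm ρ w) ((E n).indicator g)
        = assocNorm ρ ((E n).indicator (fun x => g x * (w x)⁻¹)) := fun n => by
      rw [assoc_eq, indicator_mul_aux]
    simp only [h1]
    have hfin' : assocNorm ρ (fun x => g x * (w x)⁻¹) < ∞ := by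
      rw [← assoc_eq]; exact hfin
    exact href.2 (fun x => g x * (w x)⁻¹) (hg.mul hwm.inv) hfin' E hE hEt
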